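/- If H = Δ_p + V is a quasilinear Schrödinger operator associated to a graph b over (X,m) with potential V : X → ℝ, and u ∈ F_b(X) is H-harmonic, then |u| is H-subharmonic. -/

import Mathlib

open Real Filter

noncomputable section

attribute [local instance] Classical.propDecidable

/-- Signed power `a^⟨r⟩ = |a|^(r-1)·a`, with `0^⟨r⟩ = 0`. -/
def spow (r a : ℝ) : ℝ := if a = 0 then 0 else |a| ^ (r - 1) * a

/-- `b` is a (weighted, row-summable) graph over `X`. -/
def IsGraph {X : Type*} (b : X → X → ℝ) : Prop :=
  (∀ x y, 0 ≤ b x y) ∧ (∀ x y, b x y = b y x) ∧ (∀ x, b x x = 0) ∧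
    ∀ x, Summable fun y => b x y

/-- Connectedness: any two vertices are joined by a path of positive-weight edges. -/
def GraphConnected {X : Type*} (b : X → X → ℝ) : Prop :=
  ∀ x y, Relation.ReflTransGen (fun u v => 0 < b u v) x y

/-- Membership in `F_b(X)`. -/
def inF {X : Type*} (p : ℝ) (b : X → X → ℝ) (f : X → ℝ) : Prop :=
  ∀ x, Summable fun y => b x y * |f x - f y| ^ (p - 1)

/-- The weighted `p`-Laplacian. -/
def pLap {X : Type*} (p : ℝ) (b : X → X → ℝ) (m : X → ℝ) (f : X → ℝ) (x : X) : ℝ :=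
  (1 / m x) * ∑' y, b x y * spow (p - 1) (f x - f y)

/-- The quasilinear Schrödinger operator `H = Δ_p + V`. -/
def schrodOp {X : Type*} (p : ℝ) (b : X → X → ℝ) (m V : X → ℝ) (f : X → ℝ) (x : X) : ℝ :=
  pLap p b m f x + V x * spow (p - 1) (f x)

/-- The energy functional `Q_{p,b,m,V}`. -/
def pEnergy {X : Type*} (p : ℝ) (b : X → X → ℝ) (m V : X → ℝ) (φ : X → ℝ) : ℝ :=
  (1 / 2) * (∑' z : X × X, b z.1 z.2 * |φ z.1 - φ z.2| ^ p)
    + ∑' x, m x * V x * |φ x| ^ p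

/-- Positivity of `H`: existence of a positive `H`-superharmonic function. -/
def IsPositiveOp {X : Type*} (p : ℝ) (b : X → X → ℝ) (m V : X → ℝ) : Prop :=
  ∃ w : X → ℝ, inF p b w ∧ (∀ x, 0 ≤ w x) ∧ w ≠ 0 ∧ ∀ x, 0 ≤ schrodOp p b m V w x

/-- Subcriticality of the energy functional. -/
def pSubcritical {X : Type*} (p : ℝ) (b : X → X → ℝ) (m V : X → ℝ) : Prop :=
  ∃ W : X → ℝ, (∀ x, 0 ≤ W x) ∧ W ≠ 0 ∧
    ∀ φ : X → ℝ, (Function.support φ).Finite →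
      0 ≤ pEnergy p b m (fun x => V x - W x) φ

/-- Criticality: the energy functional is nonnegative but not subcritical. -/
def pCritical {X : Type*} (p : ℝ) (b : X → X → ℝ) (m V : X → ℝ) : Prop :=
  (∀ φ : X → ℝ, (Function.support φ).Finite → 0 ≤ pEnergy p b m V φ) ∧
    ¬ pSubcritical p b m V

/-- `v` is an Agmon ground state: strictly positive, harmonic, and every positive
superharmonic function is a positive multiple of it. -/
def IsAgmonGroundState {X : Type*} (p : ℝ) (b : X → X → ℝ) (m V : X → ℝ)
    (v : X → ℝ) : Prop :=
  (∀ x, 0 < v x) ∧ inF p b v ∧ (∀ x, schrodOp p b m V v x = 0) ∧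
    ∀ w : X → ℝ, inF p b w → (∀ x, 0 ≤ w x) → w ≠ 0 →
      (∀ x, 0 ≤ schrodOp p b m V w x) → ∃ c : ℝ, 0 < c ∧ ∀ x, w x = c * v x

/-- `G` is the minimal positive Green function of `Δ_p + α` with pole `o`. -/
def IsGreenFunction {X : Type*} (p : ℝ) (b : X → X → ℝ) (m : X → ℝ) (α : ℝ)
    (o : X) (G : X → ℝ) : Prop :=
  (∀ x, 0 < G x) ∧ inF p b G ∧
    (∀ x, schrodOp p b m (fun _ => α) G x = if x = o then 1 else 0) ∧
    ∀ φ : X → ℝ, inF p b φ → (∀ x, 0 < φ x) →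
      (∀ x, schrodOp p b m (fun _ => α) φ x = if x = o then 1 else 0) →
      ∀ x, G x ≤ φ x

/-- `u` is a positive solution of `H[u] = 0` of minimal growth at infinity. -/
def PositiveMinimalGrowth {X : Type*} (p : ℝ) (b : X → X → ℝ) (m V : X → ℝ)
    (u : X → ℝ) : Prop :=
  (∀ x, 0 < u x) ∧ inF p b u ∧
    ∃ K₀ : Set X, K₀.Finite ∧ (∀ x ∉ K₀, schrodOp p b m V u x = 0) ∧
      ∀ K : Set X, K.Finite → K₀ ⊆ K →
        ∀ v : X → ℝ, inF p b v → (∀ x, 0 < v x) →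
          (∀ x ∉ K, 0 ≤ schrodOp p b m V v x) → (∀ x ∈ K, u x ≤ v x) →
          ∀ x ∉ K, u x ≤ v x

/-- Combinatorial graph distance from `o` to `x`. -/
def gdist {X : Type*} (b : X → X → ℝ) (o x : X) : ℕ :=
  sInf {n : ℕ | ∃ w : ℕ → X, w 0 = o ∧ w n = x ∧ ∀ i < n, 0 < b (w i) (w (i + 1))}

/-- Total edge weight `∂_b B_k(o)` between the spheres of radii `k` and `k+1`. -/
def sphereBoundary {X : Type*} (b : X → X → ℝ) (o : X) (k : ℕ) : ℝ :=
  ∑' z : X × X, if gdist b o z.1 = k ∧ gdist b o z.2 = k + 1 then b z.1 z.2 else 0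

/-- Model graph: the inner and outer curvatures are spherically symmetric. -/
def IsModelGraph {X : Type*} (b : X → X → ℝ) (m : X → ℝ) (o : X) : Prop :=
  ∀ x y, gdist b o x = gdist b o y →
    ((1 / m x) * (∑' z, if gdist b o z = gdist b o x + 1 then b x z else 0)
        = (1 / m y) * (∑' z, if gdist b o z = gdist b o y + 1 then b y z else 0)) ∧
    ((1 / m x) * (∑' z, if gdist b o z + 1 = gdist b o x then b x z else 0)
        = (1 / m y) * (∑' z, if gdist b o z + 1 = gdist b o y then b y z else 0))

/-- The Green function of a subcritical model graph:
`G₀(x) = ∑_{k=|x|}^∞ (m(o)/∂_bB_k(o))^{1/(p-1)}`. -/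
def modelGreen {X : Type*} (p : ℝ) (b : X → X → ℝ) (m : X → ℝ) (o : X) (x : X) : ℝ :=
  ∑' k : ℕ, (m o / sphereBoundary b o (gdist b o x + k)) ^ (1 / (p - 1))

/-- The `d`-regular tree with standard weights, root `o` and distance function `ℓ`. -/
def IsRegularTree {X : Type*} (d : ℕ) (b : X → X → ℝ) (o : X) (ℓ : X → ℕ) : Prop :=
  (∀ x y, b x y = b y x) ∧ (∀ x, b x x = 0) ∧ (∀ x y, b x y = 0 ∨ b x y = 1) ∧
    ℓ o = 0 ∧
    (∀ x, {y | b x y = 1 ∧ ℓ y = ℓ x + 1}.ncard = d) ∧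
    (∀ x, x ≠ o → {y | b x y = 1 ∧ ℓ y + 1 = ℓ x}.ncard = 1) ∧
    (∀ x y, b x y = 1 → ℓ y = ℓ x + 1 ∨ ℓ x = ℓ y + 1)

/-- The simplified energy functional `E_u(φ)`. -/
def simpEnergy {X : Type*} (p : ℝ) (b : X → X → ℝ) (u φ : X → ℝ) : ℝ :=
  ∑' z : X × X,
    b z.1 z.2 * (u z.1 * u z.2) * |φ z.1 - φ z.2| ^ 2 *
      (|u z.1 - u z.2| * ((|φ z.1| + |φ z.2|) / 2)
        + (u z.1 * u z.2) ^ ((1 : ℝ) / 2) * |φ z.1 - φ z.2|) ^ (p - 2)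

section SignedPower

variable {r : ℝ}

@[simp]
lemma spow_zero (r : ℝ) : spow r 0 = 0 := if_pos rfl

lemma spow_neg (r a : ℝ) : spow r (-a) = -spow r a := by
  rcases eq_or_ne a 0 with rfl | ha
  · simp
  · rw [spow, spow, if_neg (neg_ne_zero.mpr ha), if_neg ha, abs_neg, mul_neg]

lemma spow_of_nonneg (hr : r ≠ 0) {a : ℝ} (ha : 0 ≤ a) : spow r a = a ^ r := by
  rcases ha.eq_or_lt with rfl | ha
  · rw [spow_zero, zero_rpow hr]
  · rw [spow, if_neg ha.ne', abs_of_pos ha, ← rpow_add_one ha.ne', sub_add_cancel]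

lemma abs_spow_le (r a : ℝ) : |spow r a| ≤ |a| ^ r := by
  rcases eq_or_ne a 0 with rfl | ha
  · simpa using rpow_nonneg le_rfl r
  · rw [spow, if_neg ha, abs_mul, abs_of_nonneg (rpow_nonneg (abs_nonneg a) _),
      ← rpow_add_one (abs_ne_zero.mpr ha), sub_add_cancel]

lemma spow_monotone (hr : 0 < r) : Monotone (spow r) := by
  have hIci : MonotoneOn (spow r) (Set.Ici 0) := fun a ha c hc hac => by
    rw [spow_of_nonneg hr.ne' ha, spow_of_nonneg hr.ne' hc]
    exact rpow_le_rpow ha hac hr.le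
  have hIic : MonotoneOn (spow r) (Set.Iic 0) := fun a ha c hc hac => by
    have := hIci (Set.mem_Ici.mpr (neg_nonneg.mpr hc)) (Set.mem_Ici.mpr (neg_nonneg.mpr ha))
      (neg_le_neg hac)
    rwa [spow_neg, spow_neg, neg_le_neg_iff] at this
  exact hIic.Iic_union_Ici hIci

end SignedPower

namespace inF

variable {X : Type*} {p : ℝ} {b : X → X → ℝ} {u : X → ℝ}

lemma of_abs_sub_le (hb : ∀ x y, 0 ≤ b x y) (hp : 1 ≤ p) (hu : inF p b u) {v : X → ℝ}
    (hvu : ∀ x y, |v x - v y| ≤ |u x - u y|) : inF p b v := fun x =>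
  (hu x).of_nonneg_of_le (fun y => mul_nonneg (hb x y) (rpow_nonneg (abs_nonneg _) _))
    fun y => mul_le_mul_of_nonneg_left
      (rpow_le_rpow (abs_nonneg _) (hvu x y) (sub_nonneg.mpr hp)) (hb x y)

lemma summable_mul_spow (hb : ∀ x y, 0 ≤ b x y) (hu : inF p b u) (x : X) :
    Summable fun y => b x y * spow (p - 1) (u x - u y) :=
  (hu x).of_norm_bounded fun y => by
    rw [Real.norm_eq_abs, abs_mul, abs_of_nonneg (hb x y)]
    exact mul_le_mul_of_nonneg_left (abs_spow_le _ _) (hb x y)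

end inF

section SchrodingerOperator

variable {X : Type*} {p : ℝ} {b : X → X → ℝ} {m V u : X → ℝ}

lemma schrodOp_neg (x : X) :
    schrodOp p b m V (fun x => -u x) x = -schrodOp p b m V u x := by
  simp only [schrodOp, pLap, neg_sub_neg, ← neg_sub (u x), spow_neg, mul_neg, tsum_neg]
  ring

/-- At a point where `u ≥ 0`, every difference `|u x| - |u y| = u x - |u y|` is at most
`u x - u y`, and the signed power is monotone. -/
lemma schrodOp_abs_le_of_nonneg (hp : 1 < p) (hb : ∀ x y, 0 ≤ b x y) (hu : inF p b u)
    {x : X} (hm : 0 ≤ m x) (hx : 0 ≤ u x) :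
    schrodOp p b m V (fun x => |u x|) x ≤ schrodOp p b m V u x := by
  have hsum_abs := (hu.of_abs_sub_le hb hp.le fun x y =>
    abs_abs_sub_abs_le_abs_sub _ _).summable_mul_spow hb x
  simp only [schrodOp, pLap]
  rw [abs_of_nonneg hx] at hsum_abs ⊢
  gcongr ?_ + _
  refine mul_le_mul_of_nonneg_left ?_ (one_div_nonneg.mpr hm)
  refine hsum_abs.tsum_le_tsum (fun y => ?_) (hu.summable_mul_spow hb x)
  exact mul_le_mul_of_nonneg_left
    (spow_monotone (sub_pos.mpr hp) (by linarith [le_abs_self (u y)])) (hb x y)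

end SchrodingerOperator

theorem abs_subharmonic_general
    {X : Type}
    (p : ℝ) (hp : 1 < p) (m : X → ℝ) (hm : ∀ x, 0 < m x)
    (b : X → X → ℝ) (hb : IsGraph b) (V : X → ℝ)
    (u : X → ℝ) (hu : inF p b u)
    (hharm : ∀ x, schrodOp p b m V u x = 0) :
    inF p b (fun x => |u x|) ∧
      ∀ x, schrodOp p b m V (fun x => |u x|) x ≤ 0 := by
  have hb₀ : ∀ x y, 0 ≤ b x y := hb.1
  refine ⟨hu.of_abs_sub_le hb₀ hp.le fun x y => abs_abs_sub_abs_le_abs_sub _ _, fun x => ?_⟩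
  rcases le_total 0 (u x) with hx | hx
  · exact (schrodOp_abs_le_of_nonneg hp hb₀ hu (hm x).le hx).trans (hharm x).le
  · -- apply the case `u x ≥ 0` to `-u`, which has the same absolute value
    have hu_neg : inF p b fun x => -u x :=
      hu.of_abs_sub_le hb₀ hp.le fun x y => by rw [neg_sub_neg, abs_sub_comm]
    have h := schrodOp_abs_le_of_nonneg (V := V) hp hb₀ hu_neg (hm x).le (neg_nonneg.mpr hx)
    simpa only [abs_neg, schrodOp_neg, hharm x, neg_zero] using h

/-- the absolute value of an `H`-harmonic function is `H`-subharmonic. -/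
theorem abs_subharmonic
    {X : Type} [Countable X] [Infinite X]
    (p : ℝ) (hp : 1 < p) (m : X → ℝ) (hm : ∀ x, 0 < m x)
    (b : X → X → ℝ) (hb : IsGraph b) (V : X → ℝ)
    (u : X → ℝ) (hu : inF p b u)
    (hharm : ∀ x, schrodOp p b m V u x = 0) :
    inF p b (fun x => |u x|) ∧
      ∀ x, schrodOp p b m V (fun x => |u x|) x ≤ 0 :=
  abs_subharmonic_general p hp m hm b hb V u hu hharm
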